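/- arXiv:2410.03849 — 4 statements merged into one kernel-verified Lean document; each statement's English description precedes it below -/
import Mathlib

section
/- For every horizon T ≥ 1 and every nonempty class F of sequential experts, the minimax regret of sequential probability assignment equals the worst-case log contextual Shtarkov sum: R_T(F) = sup_x log S_T(F | x), where the supremum ranges over all context trees x of depth T and the equality holds in the extended reals. -/
open scoped BigOperators

/-- The probability simplex on a finite label set `Y`. -/
abbrev Simplex (Y : Type*) [Fintype Y] :=
  {p : Y → ℝ // (∀ y, 0 ≤ p y) ∧ ∑ y, p y = 1}

/-- A sequential expert: given contexts `x₁,…,x_t` (a list of length `t`) and past labels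
`y₁,…,y_{t-1}` (a list of length `t-1`), it predicts a distribution over labels. -/
abbrev Expert (X Y : Type*) [Fintype Y] := List X → List Y → Simplex Y

/-- `-log x` as an extended real, with `-log 0 = ⊤` (and junk value `⊤` for `x < 0`). -/
noncomputable def negLog (x : ℝ) : EReal :=
  if x ≤ 0 then ⊤ else ((-Real.log x : ℝ) : EReal)

/-- `log x` as an extended real, with `log 0 = ⊥` (and junk value `⊥` for `x < 0`). -/
noncomputable def elog (x : ℝ) : EReal :=
  if x ≤ 0 then ⊥ else ((Real.log x : ℝ) : EReal)

/-- The logarithmic loss `ℓ(p, y) = -log p(y) ∈ [0, ∞]`. -/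
noncomputable def logloss {Y : Type*} [Fintype Y] (p : Simplex Y) (y : Y) : EReal :=
  negLog (p.1 y)

/-- Likelihood of expert `f` on a context sequence `xs` and a label sequence `ys`
of the same length: `L(f; y_{1:d} | x_{1:d}) = ∏_{t=1}^d f(x_{1:t}, y_{1:t-1})(y_t)`. -/
noncomputable def likelihood {X Y : Type*} [Fintype Y] [Inhabited Y]
    (f : Expert X Y) (xs : List X) (ys : List Y) : ℝ :=
  ∏ t ∈ Finset.range ys.length, (f (xs.take (t + 1)) (ys.take t)).1 (ys.getD t default)

/-- Cumulative log loss of expert `f` on `xs`, `ys`: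
`Σ_{t=1}^d ℓ(f(x_{1:t}, y_{1:t-1}), y_t)`. -/
noncomputable def cumLoss {X Y : Type*} [Fintype Y] [Inhabited Y]
    (f : Expert X Y) (xs : List X) (ys : List Y) : EReal :=
  ∑ t ∈ Finset.range ys.length, logloss (f (xs.take (t + 1)) (ys.take t)) (ys.getD t default)

/-- A context tree of depth `T` is modelled as a map `χ : List Y → X` (only its values on
lists of length `< T` matter): `x_t(y) = χ (y_{1:t-1})`.  `treePath χ ys` is the context
sequence `x(y) = (x_1, x_2(y_1), …)` obtained by tracing the tree along the path `ys`. -/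
def treePath {X Y : Type*} (χ : List Y → X) (ys : List Y) : List X :=
  (List.range ys.length).map fun t => χ (ys.take t)

/-- The contextual Shtarkov sum of `F` on a context tree `χ` of depth `r`, with prefix
`xs ∈ X^t`, `ys ∈ Y^t`:
`S_T(F, χ | x_{1:t}, y_{1:t}) = Σ_{y ∈ Y^r} sup_{f ∈ F} L(f; (y_{1:t}, y) | (x_{1:t}, χ(y)))`. -/
noncomputable def shtarkovPrefix {X Y : Type*} [Fintype Y] [Inhabited Y]
    (F : Set (Expert X Y)) (r : ℕ) (χ : List Y → X) (xs : List X) (ys : List Y) : ℝ :=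
  ∑ y : Fin r → Y, ⨆ f : F,
    likelihood (f : Expert X Y) (xs ++ treePath χ (List.ofFn y)) (ys ++ List.ofFn y)

/-- The contextual Shtarkov sum `S_T(F | χ) = Σ_{y ∈ Y^T} sup_{f ∈ F} L(f; y | χ(y))`. -/
noncomputable def shtarkov {X Y : Type*} [Fintype Y] [Inhabited Y]
    (F : Set (Expert X Y)) (T : ℕ) (χ : List Y → X) : ℝ :=
  shtarkovPrefix F T χ [] []

/-- The extensive-form game value with `r` rounds to go, given past contexts `xs`, past
labels `ys`, and accumulated learner loss `acc`:
`sup_{x} inf_{p̂} sup_{y} ⋯ [ acc + Σ ℓ(p̂_s, y_s) − inf_{f ∈ F} Σ_{s=1}^T ℓ(f, y_s) ]`. -/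
noncomputable def valToGo {X Y : Type*} [Fintype Y] [Inhabited Y]
    (F : Set (Expert X Y)) : ℕ → List X → List Y → EReal → EReal
  | 0, xs, ys, acc => acc - ⨅ f : F, cumLoss (f : Expert X Y) xs ys
  | r + 1, xs, ys, acc =>
      ⨆ x : X, ⨅ p : Simplex Y, ⨆ y : Y,
        valToGo F r (xs ++ [x]) (ys ++ [y]) (acc + logloss p y)

/-- The minimax regret
`R_T(F) = sup_{x_1} inf_{p̂_1} sup_{y_1} ⋯ sup_{x_T} inf_{p̂_T} sup_{y_T} R_T(F; p̂, x, y)`. -/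
noncomputable def minimaxRegret {X Y : Type*} [Fintype Y] [Inhabited Y]
    (F : Set (Expert X Y)) (T : ℕ) : EReal :=
  valToGo F T [] [] 0

/-- Nested conditional expectation over a probabilistic tree `π`, for `r` remaining rounds:
`E_{y_1 ∼ π([])} E_{y_2 ∼ π(y_{1:1})} ⋯ [g(y_{1:r})]`. -/
noncomputable def expTree {Y : Type*} [Fintype Y] (π : List Y → Simplex Y)
    (g : List Y → EReal) : ℕ → List Y → EReal
  | 0, pre => g pre
  | r + 1, pre => ∑ y : Y, ((π pre).1 y : EReal) * expTree π g r (pre ++ [y])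

/-- The dual (max-min) value-to-go `W(F, x_{1:t}, y_{1:t})`: the supremum over context trees
`χ` and probabilistic trees `π` of depth `r = T - t` of
`E_{y∼π}[ Σ_{s=t+1}^T ℓ(π_s(y), y_s) − inf_{f ∈ F} Σ_{s=1}^T ℓ(f, y_s) ]`. -/
noncomputable def dualValToGo {X Y : Type*} [Fintype Y] [Inhabited Y]
    (F : Set (Expert X Y)) (r : ℕ) (xs : List X) (ys : List Y) : EReal :=
  ⨆ χ : List Y → X, ⨆ π : List Y → Simplex Y,
    expTree π (fun suf =>
      (∑ s ∈ Finset.range r, logloss (π (suf.take s)) (suf.getD s default)) -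
        ⨅ f : F, cumLoss (f : Expert X Y) (xs ++ treePath χ suf) (ys ++ suf)) r []

/-- The dual (max-min) value `V_T(F)`. -/
noncomputable def dualValue {X Y : Type*} [Fintype Y] [Inhabited Y]
    (F : Set (Expert X Y)) (T : ℕ) : EReal :=
  dualValToGo F T [] []

/-!
Both sides are computed backwards from the last round. Measuring losses through
`log : ℝ≥0∞ → EReal`, the learner's loss `ℓ(p̂, y) = log (1 / p̂(y))` turns the inner
`sup_y [ℓ(p̂, y) + log w_y]` into `log (sup_y w_y / p̂(y))`. Since `p̂` sums to one,
`sup_y w_y / p̂(y) ≥ ∑_y w_y`, with equality for the normalized maximum likelihood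
`p̂ = w / ∑ w`; so each round `inf_p̂ sup_y` replaces the next-round values `w_y` by `∑_y w_y`.
With `w_y` the worst-case Shtarkov sum of the remaining rounds, this is the recursion of the
worst-case Shtarkov sum over context trees, the adversary's context becoming the root of the
tree. At the leaves, `-inf_f` of the cumulative loss is the log of the maximal likelihood.
-/

open Finset ENNReal

theorem EReal.add_iSup {ι : Sort*} (a : EReal) (f : ι → EReal) :
    a + ⨆ i, f i = ⨆ i, a + f i := by
  refine le_antisymm ?_ (iSup_le fun i => add_le_add le_rfl (le_iSup f i))
  induction a with
  | bot => simp
  | coe x =>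
    have hc : ContinuousAt (fun z : EReal => (x : EReal) + z) (⨆ i, f i) :=
      (EReal.continuousAt_add (Or.inl (EReal.coe_ne_top x)) (Or.inl (EReal.coe_ne_bot x))).comp
        (continuous_const.prodMk continuous_id).continuousAt
    exact (Monotone.map_iSup_of_continuousAt hc (fun _ _ h => add_le_add le_rfl h)
      (EReal.add_bot _)).le
  | top =>
    by_cases h : ∀ i, f i = ⊥
    · simp [iSup_eq_bot.2 h]
    · obtain ⟨i, hi⟩ := not_forall.1 h
      exact le_top.trans (le_iSup_of_le i (EReal.top_add_of_ne_bot hi).ge)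

theorem Monotone.iInf_comp_eq_of_isLeast {α β ι : Type*} [Preorder α] [CompleteLattice β]
    {g : α → β} (hg : Monotone g) {f : ι → α} {a : α} (h : IsLeast (Set.range f) a) :
    ⨅ i, g (f i) = g a := by
  have := (hg.map_isLeast h).csInf_eq
  rwa [← Set.range_comp] at this

namespace ENNReal

theorem log_iSup {ι : Sort*} (w : ι → ℝ≥0∞) : log (⨆ i, w i) = ⨆ i, log (w i) :=
  logOrderIso.map_iSup w

theorem log_iInf {ι : Sort*} (w : ι → ℝ≥0∞) : log (⨅ i, w i) = ⨅ i, log (w i) :=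
  logOrderIso.map_iInf w

theorem log_prod {ι : Type*} (s : Finset ι) (w : ι → ℝ≥0∞) :
    log (∏ i ∈ s, w i) = ∑ i ∈ s, log (w i) := by
  induction s using Finset.cons_induction with
  | empty => simp
  | cons i s hi ih => rw [prod_cons, sum_cons, log_mul_add, ih]

theorem ofReal_iSup_of_bddAbove {ι : Sort*} {g : ι → ℝ} (hg : BddAbove (Set.range g)) :
    ENNReal.ofReal (⨆ i, g i) = ⨆ i, ENNReal.ofReal (g i) := by
  cases isEmpty_or_nonempty ι
  · simp
  · exact Monotone.map_ciSup_of_continuousAt ENNReal.continuous_ofReal.continuousAt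
      (fun _ _ h => ENNReal.ofReal_le_ofReal h) hg

theorem finsetSum_iSup_eq_iSup_pi {α κ : Type*} [Nonempty κ] (s : Finset α)
    (f : α → κ → ℝ≥0∞) : ∑ a ∈ s, ⨆ k, f a k = ⨆ g : α → κ, ∑ a ∈ s, f a (g a) := by
  classical
  simp_rw [← fun a => (Function.surjective_eval (β := fun _ : α => κ) a).iSup_comp (f a)]
  refine finsetSum_iSup fun g₁ g₂ =>
    ⟨fun a => if f a (g₁ a) ≤ f a (g₂ a) then g₂ a else g₁ a, fun a => ?_⟩
  dsimp only [Function.eval]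
  split_ifs with h
  · exact ⟨h, le_rfl⟩
  · exact ⟨le_rfl, (not_le.1 h).le⟩

end ENNReal

theorem negLog_eq_log_inv (x : ℝ) : negLog x = log (ENNReal.ofReal x)⁻¹ := by
  rw [log_inv, log_ofReal, negLog]
  split_ifs <;> simp

theorem elog_eq_log_ofReal (x : ℝ) : elog x = log (ENNReal.ofReal x) := by
  rw [elog, log_ofReal]

section NormalizedMaximumLikelihood

variable {Y : Type*} [Fintype Y]

theorem Simplex.apply_le_one (p : Simplex Y) (y : Y) : p.1 y ≤ 1 :=
  (single_le_sum (fun z _ => p.2.1 z) (mem_univ y)).trans_eq p.2.2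

theorem logloss_add_log (p : Simplex Y) (y : Y) (w : ℝ≥0∞) :
    logloss p y + log w = log (w / ENNReal.ofReal (p.1 y)) := by
  rw [logloss, negLog_eq_log_inv, div_eq_mul_inv, log_mul_add, add_comm]

theorem exists_simplex_ofReal_eq (q : Y → ℝ≥0∞) (hq : ∑ y, q y = 1) :
    ∃ p : Simplex Y, ∀ y, ENNReal.ofReal (p.1 y) = q y := by
  have hq_top : ∀ y, q y ≠ ⊤ := fun y =>
    ne_top_of_le_ne_top one_ne_top (hq ▸ single_le_sum (fun _ _ => zero_le) (mem_univ y))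
  exact ⟨⟨fun y => (q y).toReal, fun _ => toReal_nonneg,
    by rw [← toReal_sum fun y _ => hq_top y, hq, toReal_one]⟩, fun y => ofReal_toReal (hq_top y)⟩

theorem Simplex.sum_le_iSup_div (p : Simplex Y) (w : Y → ℝ≥0∞) :
    ∑ y, w y ≤ ⨆ y, w y / ENNReal.ofReal (p.1 y) := by
  set M := ⨆ y, w y / ENNReal.ofReal (p.1 y)
  rcases eq_or_ne M ⊤ with hM | hM
  · exact hM ▸ le_top
  calc ∑ y, w y ≤ ∑ y, M * ENNReal.ofReal (p.1 y) := sum_le_sum fun y _ =>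
        (ENNReal.div_le_iff_le_mul (Or.inr hM) (Or.inl ofReal_ne_top)).1 (le_iSup_of_le y le_rfl)
    _ = M := by
      rw [← mul_sum, ← ofReal_sum_of_nonneg fun y _ => p.2.1 y, p.2.2, ofReal_one, mul_one]

variable [Nonempty Y]

theorem isLeast_iSup_div_ofReal (w : Y → ℝ≥0∞) :
    IsLeast (Set.range fun p : Simplex Y => ⨆ y, w y / ENNReal.ofReal (p.1 y)) (∑ y, w y) := by
  classical
  refine ⟨?_, by rintro _ ⟨p, rfl⟩; exact p.sum_le_iSup_div w⟩
  suffices ∃ p : Simplex Y, ⨆ y, w y / ENNReal.ofReal (p.1 y) ≤ ∑ y, w y by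
    obtain ⟨p, hp⟩ := this
    exact ⟨p, le_antisymm hp (p.sum_le_iSup_div w)⟩
  obtain ⟨p₀, -⟩ := exists_simplex_ofReal_eq (Pi.single (Classical.arbitrary Y) 1) (by simp)
  rcases eq_or_ne (∑ y, w y) ⊤ with hS | hS
  · exact ⟨p₀, hS ▸ le_top⟩
  rcases eq_or_ne (∑ y, w y) 0 with hS₀ | hS₀
  · refine ⟨p₀, iSup_le fun y => ?_⟩
    simp [sum_eq_zero_iff.1 hS₀ y (mem_univ y)]
  obtain ⟨p, hp⟩ := exists_simplex_ofReal_eq (fun y => w y / ∑ z, w z) <| by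
    simp only [div_eq_mul_inv, ← sum_mul, ENNReal.mul_inv_cancel hS₀ hS]
  exact ⟨p, iSup_le fun y => hp y ▸ div_le_of_le_mul (ENNReal.mul_div_cancel hS₀ hS).ge⟩

end NormalizedMaximumLikelihood

section LogLoss

variable {X Y : Type*} [Fintype Y] [Inhabited Y]

theorem likelihood_nonneg (f : Expert X Y) (xs : List X) (ys : List Y) :
    0 ≤ likelihood f xs ys :=
  prod_nonneg fun _ _ => (f _ _).2.1 _

theorem likelihood_le_one (f : Expert X Y) (xs : List X) (ys : List Y) :
    likelihood f xs ys ≤ 1 :=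
  prod_le_one (fun _ _ => (f _ _).2.1 _) fun _ _ => Simplex.apply_le_one _ _

theorem cumLoss_eq_log_inv_likelihood (f : Expert X Y) (xs : List X) (ys : List Y) :
    cumLoss f xs ys = log (ENNReal.ofReal (likelihood f xs ys))⁻¹ := by
  rw [cumLoss, likelihood, ENNReal.ofReal_prod_of_nonneg fun _ _ => (f _ _).2.1 _,
    prod_inv_distrib fun _ _ _ _ _ => Or.inr ofReal_ne_top, log_prod]
  simp only [logloss, negLog_eq_log_inv]

theorem iInf_cumLoss (F : Set (Expert X Y)) (xs : List X) (ys : List Y) :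
    ⨅ f : F, cumLoss (f : Expert X Y) xs ys
      = -log (ENNReal.ofReal (⨆ f : F, likelihood (f : Expert X Y) xs ys)) := by
  rw [ENNReal.ofReal_iSup_of_bddAbove ⟨1, by rintro _ ⟨f, rfl⟩; exact likelihood_le_one _ _ _⟩,
    ← log_inv, inv_iSup, log_iInf]
  simp only [cumLoss_eq_log_inv_likelihood]

end LogLoss

theorem treePath_cons {X Y : Type*} (χ : List Y → X) (y : Y) (l : List Y) :
    treePath χ (y :: l) = χ [] :: treePath (fun l' => χ (y :: l')) l := by
  simp [treePath, List.range_succ_eq_map, List.map_map, Function.comp_def]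

theorem Fintype.sum_pi_fin_succ {Y : Type*} [Fintype Y] {M : Type*} [AddCommMonoid M] {r : ℕ}
    (g : (Fin (r + 1) → Y) → M) :
    ∑ y : Fin (r + 1) → Y, g y = ∑ y₀ : Y, ∑ y : Fin r → Y, g (Fin.cons y₀ y) := by
  rw [← Fintype.sum_prod_type', ← Fintype.sum_equiv (Fin.consEquiv fun _ => Y) _ _ fun _ => rfl]
  rfl

section Shtarkov

variable {X Y : Type*} [Fintype Y] [Inhabited Y]

theorem shtarkovPrefix_nonneg (F : Set (Expert X Y)) (r : ℕ) (χ : List Y → X)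
    (xs : List X) (ys : List Y) : 0 ≤ shtarkovPrefix F r χ xs ys :=
  sum_nonneg fun _ _ => Real.iSup_nonneg fun _ => likelihood_nonneg _ _ _

theorem shtarkovPrefix_zero (F : Set (Expert X Y)) (χ : List Y → X) (xs : List X)
    (ys : List Y) : shtarkovPrefix F 0 χ xs ys = ⨆ f : F, likelihood (f : Expert X Y) xs ys := by
  simp [shtarkovPrefix, treePath]

theorem shtarkovPrefix_succ (F : Set (Expert X Y)) (r : ℕ) (χ : List Y → X) (xs : List X)
    (ys : List Y) : shtarkovPrefix F (r + 1) χ xs ys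
      = ∑ y, shtarkovPrefix F r (fun l => χ (y :: l)) (xs ++ [χ []]) (ys ++ [y]) := by
  rw [shtarkovPrefix, Fintype.sum_pi_fin_succ]
  refine sum_congr rfl fun y _ => sum_congr rfl fun y' _ => ?_
  simp only [List.ofFn_succ, Fin.cons_zero, Fin.cons_succ, treePath_cons, List.append_assoc,
    List.singleton_append]

theorem iSup_ofReal_shtarkovPrefix_succ [Nonempty X] (F : Set (Expert X Y)) (r : ℕ)
    (xs : List X) (ys : List Y) :
    ⨆ χ : List Y → X, ENNReal.ofReal (shtarkovPrefix F (r + 1) χ xs ys)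
      = ⨆ x, ∑ y, ⨆ χ : List Y → X,
          ENNReal.ofReal (shtarkovPrefix F r χ (xs ++ [x]) (ys ++ [y])) := by
  simp_rw [shtarkovPrefix_succ, ofReal_sum_of_nonneg fun _ _ => shtarkovPrefix_nonneg _ _ _ _ _,
    finsetSum_iSup_eq_iSup_pi]
  apply le_antisymm
  · exact iSup_le fun χ => le_iSup_of_le (χ []) (le_iSup_of_le (fun y l => χ (y :: l)) le_rfl)
  · refine iSup_le fun x => iSup_le fun g => ?_
    exact le_iSup_of_le (fun | [] => x | y :: l => g y l) le_rfl

end Shtarkov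

theorem valToGo_eq_add_log_iSup_shtarkovPrefix {X Y : Type*} [Fintype Y] [Inhabited Y]
    [Nonempty X] (F : Set (Expert X Y)) (r : ℕ) (xs : List X) (ys : List Y) (acc : EReal) :
    valToGo F r xs ys acc
      = acc + log (⨆ χ : List Y → X, ENNReal.ofReal (shtarkovPrefix F r χ xs ys)) := by
  induction r generalizing xs ys acc with
  | zero =>
    simp only [valToGo, shtarkovPrefix_zero, iSup_const, iInf_cumLoss, sub_eq_add_neg, neg_neg]
  | succ r ih =>
    set W := fun x y => ⨆ χ : List Y → X,
      ENNReal.ofReal (shtarkovPrefix F r χ (xs ++ [x]) (ys ++ [y]))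
    have hround : ∀ x, ⨅ p : Simplex Y, ⨆ y,
        valToGo F r (xs ++ [x]) (ys ++ [y]) (acc + logloss p y) = acc + log (∑ y, W x y) := by
      intro x
      simp only [ih, add_assoc, logloss_add_log, ← EReal.add_iSup, ← log_iSup]
      exact (monotone_const.add logOrderIso.monotone).iInf_comp_eq_of_isLeast
        (isLeast_iSup_div_ofReal (W x))
    rw [valToGo, iSup_congr hround, ← EReal.add_iSup, ← log_iSup,
      iSup_ofReal_shtarkovPrefix_succ]

theorem minimaxRegret_eq_sup_log_shtarkov_general
    {X Y : Type*} [Fintype Y] [Inhabited Y] [Nonempty X]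
    (F : Set (Expert X Y)) (T : ℕ) :
    minimaxRegret F T = ⨆ χ : List Y → X, elog (shtarkov F T χ) := by
  rw [minimaxRegret, valToGo_eq_add_log_iSup_shtarkovPrefix, zero_add, log_iSup]
  simp only [shtarkov, elog_eq_log_ofReal]

/-- For every horizon `T ≥ 1` and every nonempty class `F` of sequential
experts, the minimax regret equals the worst-case log contextual Shtarkov sum:
`R_T(F) = sup_χ log S_T(F | χ)`, supremum over all context trees of depth `T`,
in the extended reals. -/
theorem minimaxRegret_eq_sup_log_shtarkov
    {X Y : Type*} [Fintype Y] [Inhabited Y] [Nonempty X]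
    (F : Set (Expert X Y)) (hF : F.Nonempty) (T : ℕ) (hT : 1 ≤ T) :
    minimaxRegret F T = ⨆ χ : List Y → X, elog (shtarkov F T χ) :=
  minimaxRegret_eq_sup_log_shtarkov_general F T
end

section
/- For every nonempty class F ⊆ [0,1]^X, every α > 0, and every context tree x of depth T, the contextual Shtarkov sum satisfies S_T(F | x) ≤ (1 + 2α)^T · N∞(F∘x, α, T). -/
open scoped BigOperators

/-- A binary-label expert class member: a function `X → [0,1]`. -/
abbrev UnitFn (X : Type*) := X → Set.Icc (0 : ℝ) 1

/-- The Bernoulli distribution on `Bool` with mean `r ∈ [0,1]` (label `true` ↔ `1`). -/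
noncomputable def bernoulliOn (r : Set.Icc (0 : ℝ) 1) : Simplex Bool :=
  ⟨fun b => if b then (r : ℝ) else 1 - (r : ℝ), by
    constructor
    · intro b
      cases b with
      | false => simpa using r.2.2
      | true => simpa using r.2.1
    · rw [Fintype.sum_bool]
      simp⟩

/-- The sequential expert induced by `f : X → [0,1]`: it predicts the Bernoulli
distribution with mean `f(x_t)`, where `x_t` is the most recent context. -/
noncomputable def bexpert {X : Type*} [Inhabited X] (f : UnitFn X) : Expert X Bool :=
  fun xs _ => bernoulliOn (f (xs.getLast?.getD default))

/-- `V` is a sequential `ℓ∞` cover of `F ∘ χ` at scale `α` and depth `T`: for every `f ∈ F`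
and every path `y ∈ {0,1}^T` there is a tree `v ∈ V` with
`|f(x_t(y)) − v_t(y)| ≤ α` for all `t ∈ [T]`. -/
def IsSeqCover {X : Type*} (F : Set (UnitFn X)) (χ : List Bool → X) (α : ℝ) (T : ℕ)
    (V : Finset (List Bool → ℝ)) : Prop :=
  ∀ f ∈ F, ∀ y : Fin T → Bool, ∃ v ∈ V, ∀ t : Fin T,
    |(f (χ ((List.ofFn y).take t)) : ℝ) - v ((List.ofFn y).take t)| ≤ α

/-- The sequential `ℓ∞` covering number `N∞(F∘χ, α, T)`: size of the smallest cover
(`⊤` if no finite cover exists). -/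
noncomputable def coveringNumber {X : Type*} (F : Set (UnitFn X)) (χ : List Bool → X)
    (α : ℝ) (T : ℕ) : ℕ∞ :=
  ⨅ (V : Finset (List Bool → ℝ)) (_ : IsSeqCover F χ α T V), (V.card : ℕ∞)

/-- `log` of an extended natural number, valued in the extended reals. -/
noncomputable def elogENat (n : ℕ∞) : EReal :=
  WithTop.recTopCoe ⊤ (fun k => elog (k : ℝ)) n

/-- An extended natural number as an extended real. -/
noncomputable def enatToEReal (n : ℕ∞) : EReal :=
  WithTop.recTopCoe ⊤ (fun k => ((k : ℝ) : EReal)) n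

/-- The sequential `ℓ∞` entropy `H∞(F, α, T) = sup_χ log N∞(F∘χ, α, T)`. -/
noncomputable def seqEntropy {X : Type*} (F : Set (UnitFn X)) (α : ℝ) (T : ℕ) : EReal :=
  ⨆ χ : List Bool → X, elogENat (coveringNumber F χ α T)

/-!
Fix a finite sequential cover `V`. For each `v ∈ V`, clipping `v` to `[0,1]` and
adding `α` to both Bernoulli probabilities gives a tree of weights whose two children sum to
`1 + 2α`, so the weights multiplied along a path and summed over all `2^T` paths give
`(1 + 2α)^T`. If `v` is `α`-close to `f` along `y`, each likelihood factor of `f` is at most the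
corresponding weight, so the likelihood of `f` along `y` is at most the product of the weights of
some `v ∈ V`. Summing over `y` bounds the Shtarkov sum by `|V| (1 + 2α)^T`.
-/

open Finset

theorem sum_prod_ofFn_take_eq_pow {Y R : Type*} [Fintype Y] [CommSemiring R] {c : R}
    (w : List Y → Y → R) (hw : ∀ l, ∑ b, w l b = c) (r : ℕ) :
    ∑ y : Fin r → Y, ∏ t : Fin r, w ((List.ofFn y).take t) (y t) = c ^ r := by
  induction r generalizing w with
  | zero => simp
  | succ r ih =>
    rw [← (Fin.consEquiv fun _ => Y).sum_comp, Fintype.sum_prod_type]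
    simp only [Fin.consEquiv_apply, Fin.prod_univ_succ, List.ofFn_succ, Fin.cons_zero,
      Fin.cons_succ, Fin.val_zero, Fin.val_succ, List.take_zero, List.take_succ_cons,
      ← mul_sum]
    have hsub (b : Y) := ih (fun l => w (b :: l)) fun l => hw _
    simp only [hsub, ← sum_mul, hw, pow_succ']

theorem bernoulliOn_le_add_abs_sub (p q : Set.Icc (0 : ℝ) 1) (b : Bool) :
    (bernoulliOn p).1 b ≤ (bernoulliOn q).1 b + |(p : ℝ) - q| := by
  cases b <;> simp only [bernoulliOn, Bool.false_eq_true, if_false, if_true] <;>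
    linarith [le_abs_self ((p : ℝ) - q), neg_abs_le ((p : ℝ) - q)]

noncomputable def coverWeight (α : ℝ) (v : List Bool → ℝ) (l : List Bool) (b : Bool) : ℝ :=
  (bernoulliOn (Set.projIcc 0 1 zero_le_one (v l))).1 b + α

theorem coverWeight_nonneg {α : ℝ} (hα : 0 ≤ α) (v : List Bool → ℝ) (l : List Bool)
    (b : Bool) : 0 ≤ coverWeight α v l b :=
  add_nonneg ((bernoulliOn _).2.1 b) hα

theorem sum_coverWeight (α : ℝ) (v : List Bool → ℝ) (l : List Bool) :
    ∑ b, coverWeight α v l b = 1 + 2 * α := by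
  rw [Fintype.sum_bool, coverWeight, coverWeight, add_add_add_comm,
    ← Fintype.sum_bool (bernoulliOn _).1, (bernoulliOn _).2.2, two_mul]

theorem bernoulliOn_le_coverWeight {α : ℝ} {v : List Bool → ℝ} {l : List Bool}
    {p : Set.Icc (0 : ℝ) 1} (h : |(p : ℝ) - v l| ≤ α) (b : Bool) :
    (bernoulliOn p).1 b ≤ coverWeight α v l b := by
  have hclip : |(p : ℝ) - Set.projIcc 0 1 zero_le_one (v l)| ≤ |(p : ℝ) - v l| := by
    simpa only [Set.projIcc_val] using
      Set.abs_projIcc_sub_projIcc (c := (p : ℝ)) (d := v l) zero_le_one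
  rw [coverWeight]
  linarith [bernoulliOn_le_add_abs_sub p (Set.projIcc 0 1 zero_le_one (v l)) b]

theorem getLast?_take_succ_treePath {X Y : Type*} (χ : List Y → X) {L : List Y} {t : ℕ}
    (ht : t < L.length) :
    ((treePath χ L).take (t + 1)).getLast? = some (χ (L.take t)) := by
  rw [treePath, ← List.map_take, List.take_range, min_eq_left ht, List.range_succ,
    List.map_append]
  simp

theorem likelihood_bexpert_treePath {X : Type*} [Inhabited X] (f : UnitFn X)
    (χ : List Bool → X) {T : ℕ} (y : Fin T → Bool) :
    likelihood (bexpert f) (treePath χ (List.ofFn y)) (List.ofFn y) =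
      ∏ t : Fin T, (bernoulliOn (f (χ ((List.ofFn y).take t)))).1 (y t) := by
  rw [likelihood, List.length_ofFn, ← Fin.prod_univ_eq_prod_range]
  refine prod_congr rfl fun t _ => ?_
  simp [bexpert, getLast?_take_succ_treePath χ (L := List.ofFn y) (by simp : (t : ℕ) < _)]

theorem likelihood_bexpert_le_prod_coverWeight {X : Type*} [Inhabited X] (f : UnitFn X)
    (χ : List Bool → X) {α : ℝ} {T : ℕ} (y : Fin T → Bool) (v : List Bool → ℝ)
    (hv : ∀ t : Fin T, |(f (χ ((List.ofFn y).take t)) : ℝ) - v ((List.ofFn y).take t)| ≤ α) :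
    likelihood (bexpert f) (treePath χ (List.ofFn y)) (List.ofFn y) ≤
      ∏ t : Fin T, coverWeight α v ((List.ofFn y).take t) (y t) := by
  rw [likelihood_bexpert_treePath]
  exact prod_le_prod (fun t _ => (bernoulliOn _).2.1 _)
    fun t _ => bernoulliOn_le_coverWeight (hv t) _

theorem shtarkov_le_card_mul_pow {X : Type*} [Inhabited X] {F : Set (UnitFn X)}
    {χ : List Bool → X} {α : ℝ} (hα : 0 ≤ α) {T : ℕ} {V : Finset (List Bool → ℝ)}
    (hV : IsSeqCover F χ α T V) :
    shtarkov (bexpert '' F) T χ ≤ V.card * (1 + 2 * α) ^ T := by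
  have hpath (y : Fin T → Bool) :
      ⨆ g : bexpert '' F, likelihood (g : Expert X Bool) (treePath χ (List.ofFn y)) (List.ofFn y)
        ≤ ∑ v ∈ V, ∏ t : Fin T, coverWeight α v ((List.ofFn y).take t) (y t) := by
    refine Real.iSup_le (fun ⟨g, f, hf, hfg⟩ => ?_)
      (sum_nonneg fun v _ => prod_nonneg fun t _ => coverWeight_nonneg hα v _ _)
    obtain ⟨v, hvV, hv⟩ := hV f hf y
    subst hfg
    refine (likelihood_bexpert_le_prod_coverWeight f χ y v hv).trans ?_
    exact single_le_sum (f := fun w => ∏ t : Fin T, coverWeight α w ((List.ofFn y).take t) (y t))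
      (fun w _ => prod_nonneg fun t _ => coverWeight_nonneg hα w _ _) hvV
  calc shtarkov (bexpert '' F) T χ
      ≤ ∑ y : Fin T → Bool, ∑ v ∈ V, ∏ t : Fin T, coverWeight α v ((List.ofFn y).take t) (y t) :=
        sum_le_sum fun y _ => by simpa only [shtarkov, shtarkovPrefix, List.nil_append] using hpath y
    _ = ∑ v ∈ V, ∑ y : Fin T → Bool, ∏ t : Fin T, coverWeight α v ((List.ofFn y).take t) (y t) :=
        sum_comm
    _ = V.card * (1 + 2 * α) ^ T := by
        simp only [sum_prod_ofFn_take_eq_pow _ (sum_coverWeight α _), sum_const, nsmul_eq_mul]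

theorem exists_isSeqCover_card_eq_coveringNumber {X : Type*} {F : Set (UnitFn X)}
    {χ : List Bool → X} {α : ℝ} {T : ℕ} (h : coveringNumber F χ α T ≠ ⊤) :
    ∃ V, IsSeqCover F χ α T V ∧ (V.card : ℕ∞) = coveringNumber F χ α T := by
  rw [coveringNumber, iInf_subtype'] at h ⊢
  have : Nonempty {V // IsSeqCover F χ α T V} := by
    by_contra hempty
    rw [not_nonempty_iff] at hempty
    exact h (iInf_of_empty _)
  obtain ⟨⟨V, hV⟩, hcard⟩ := ENat.exists_eq_iInf fun V : {V // IsSeqCover F χ α T V} =>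
    (V.1.card : ℕ∞)
  exact ⟨V, hV, hcard⟩

theorem shtarkov_le_coveringNumber_general
    {X : Type*} [Inhabited X] (F : Set (UnitFn X))
    (T : ℕ) (α : ℝ) (hα : 0 < α) (χ : List Bool → X) :
    ((shtarkov (bexpert '' F) T χ : ℝ) : EReal) ≤
      ((((1 + 2 * α) ^ T : ℝ)) : EReal) * enatToEReal (coveringNumber F χ α T) := by
  by_cases htop : coveringNumber F χ α T = ⊤
  · rw [htop, show enatToEReal ⊤ = ⊤ from rfl, EReal.coe_mul_top_of_pos (by positivity)]
    exact le_top
  obtain ⟨V, hV, hcard⟩ := exists_isSeqCover_card_eq_coveringNumber htop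
  rw [← hcard, show enatToEReal V.card = ((V.card : ℝ) : EReal) from rfl, ← EReal.coe_mul,
    EReal.coe_le_coe_iff, mul_comm]
  exact shtarkov_le_card_mul_pow hα.le hV

/-- For every nonempty class `F ⊆ [0,1]^X`, every `α > 0` and every context
tree `χ` of depth `T`, the contextual Shtarkov sum satisfies
`S_T(F | χ) ≤ (1 + 2α)^T · N∞(F∘χ, α, T)`. -/
theorem shtarkov_le_coveringNumber
    {X : Type*} [Inhabited X] (F : Set (UnitFn X)) (hF : F.Nonempty)
    (T : ℕ) (α : ℝ) (hα : 0 < α) (χ : List Bool → X) :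
    ((shtarkov (bexpert '' F) T χ : ℝ) : EReal) ≤
      ((((1 + 2 * α) ^ T : ℝ)) : EReal) * enatToEReal (coveringNumber F χ α T) :=
  shtarkov_le_coveringNumber_general F T α hα χ
end

section
/- Let H be a real Hilbert space, T ≥ 1, and let x_1, …, x_T ∈ H be orthonormal vectors. For the linear class F^Lin = { x ↦ (⟨w, x⟩ + 1)/2 : w in the closed unit ball of H } with binary labels, the conditional Shtarkov sum on the context sequence x_{1:T} satisfies S_T(F^Lin | x_{1:T}) ≥ (1 + 1/√T)^T; consequently log S_T(F^Lin | x_{1:T}) ≥ T·log(1 + 1/√T) ≥ √T/4. -/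
open scoped BigOperators RealInnerProductSpace

/-- The conditional Shtarkov sum of the linear class
`F^Lin = { x ↦ (⟨w, x⟩ + 1)/2 : ‖w‖ ≤ 1 }` (with binary labels, where `f ∈ F^Lin` predicts
the Bernoulli distribution with mean `f(x)`) on a context sequence `x_1, …, x_T`:
`S_T(F^Lin | x_{1:T}) = Σ_{y ∈ {0,1}^T} sup_{‖w‖ ≤ 1} ∏_t f_w(x_t)^{y_t}(1 − f_w(x_t))^{1−y_t}`. -/
noncomputable def linShtarkov {H : Type*} [NormedAddCommGroup H] [InnerProductSpace ℝ H]
    (T : ℕ) (x : Fin T → H) : ℝ :=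
  ∑ y : Fin T → Bool, ⨆ w : {w : H // ‖w‖ ≤ 1},
    ∏ t : Fin T,
      (if y t then (⟪(w : H), x t⟫ + 1) / 2 else 1 - (⟪(w : H), x t⟫ + 1) / 2)

/-! For each label sequence `y`, the expert `w = T^{-1/2} ∑_t ±x_t`, with the sign of the `t`-th
term read off `y_t`, lies in the unit ball by orthonormality and gives every label probability
`(1 + 1/√T)/2`. Summing over the `2^T` label sequences yields `(1 + 1/√T)^T`, and the logarithmic
bounds follow from `log (1 + u) ≥ u / 2` on `[0, 1]`. -/

/-- `linLik (y t) ⟪w, x t⟫` is, by definition, the `t`-th factor of the likelihood in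
`linShtarkov`. -/
noncomputable def linLik (b : Bool) (a : ℝ) : ℝ :=
  if b then (a + 1) / 2 else 1 - (a + 1) / 2

lemma linLik_nonneg (b : Bool) {a : ℝ} (ha : |a| ≤ 1) : 0 ≤ linLik b a := by
  cases b <;> simp only [linLik, Bool.false_eq_true, if_false, if_true] <;>
    linarith [abs_le.mp ha]

lemma linLik_le_one (b : Bool) {a : ℝ} (ha : |a| ≤ 1) : linLik b a ≤ 1 := by
  cases b <;> simp only [linLik, Bool.false_eq_true, if_false, if_true] <;>
    linarith [abs_le.mp ha]

lemma linLik_sign (b : Bool) (u : ℝ) : linLik b (if b then u else -u) = (1 + u) / 2 := by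
  cases b <;> simp only [linLik, Bool.false_eq_true, if_false, if_true] <;> ring

section Orthonormal

variable {ι H : Type*} [Fintype ι] [NormedAddCommGroup H] [InnerProductSpace ℝ H] {x : ι → H}

lemma Orthonormal.norm_sum_smul_sq (hx : Orthonormal ℝ x) (l : ι → ℝ) :
    ‖∑ i, l i • x i‖ ^ 2 = ∑ i, l i ^ 2 := by
  rw [← real_inner_self_eq_norm_sq, hx.inner_sum l l Finset.univ]
  simp only [conj_trivial, sq]

lemma Orthonormal.bddAbove_range_prod_linLik (hx : Orthonormal ℝ x) (y : ι → Bool) :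
    BddAbove (Set.range fun w : {w : H // ‖w‖ ≤ 1} =>
      ∏ i, linLik (y i) ⟪(w : H), x i⟫) := by
  refine ⟨1, ?_⟩
  rintro _ ⟨w, rfl⟩
  have hw : ∀ i, |⟪(w : H), x i⟫| ≤ 1 := fun i =>
    (abs_real_inner_le_norm _ _).trans (by simpa [hx.1 i] using w.2)
  exact Finset.prod_le_one (fun i _ => linLik_nonneg _ (hw i)) fun i _ => linLik_le_one _ (hw i)

lemma Orthonormal.pow_le_iSup_prod_linLik (hx : Orthonormal ℝ x) {u : ℝ}
    (hu : Fintype.card ι * u ^ 2 ≤ 1) (y : ι → Bool) :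
    ((1 + u) / 2) ^ Fintype.card ι ≤
      ⨆ w : {w : H // ‖w‖ ≤ 1}, ∏ i, linLik (y i) ⟪(w : H), x i⟫ := by
  set l : ι → ℝ := fun i => if y i then u else -u
  have hl : ∀ i, l i ^ 2 = u ^ 2 := fun i => by by_cases h : y i <;> simp [l, h]
  have hw : ‖∑ i, l i • x i‖ ≤ 1 := by
    have : ‖∑ i, l i • x i‖ ^ 2 ≤ 1 := by
      simpa [hx.norm_sum_smul_sq, hl] using hu
    nlinarith [norm_nonneg (∑ i, l i • x i)]
  have hval :
      ∏ i, linLik (y i) ⟪∑ j, l j • x j, x i⟫ = ((1 + u) / 2) ^ Fintype.card ι := by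
    simp only [hx.inner_left_fintype, conj_trivial, l, linLik_sign, Finset.prod_const,
      Finset.card_univ]
  exact hval ▸ le_ciSup (hx.bddAbove_range_prod_linLik y) ⟨_, hw⟩

end Orthonormal

lemma Orthonormal.one_add_pow_le_linShtarkov {H : Type*} [NormedAddCommGroup H]
    [InnerProductSpace ℝ H] {T : ℕ} {x : Fin T → H} (hx : Orthonormal ℝ x) {u : ℝ}
    (hu : T * u ^ 2 ≤ 1) : (1 + u) ^ T ≤ linShtarkov T x := by
  calc (1 + u) ^ T = ∑ _y : Fin T → Bool, ((1 + u) / 2) ^ T := by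
        simp only [Finset.sum_const, Finset.card_univ, Fintype.card_fun, Fintype.card_bool,
          Fintype.card_fin, nsmul_eq_mul, Nat.cast_pow, Nat.cast_ofNat, ← mul_pow]
        ring_nf
    _ ≤ linShtarkov T x := Finset.sum_le_sum fun y _ => by
        have h := hx.pow_le_iSup_prod_linLik (u := u) (by rwa [Fintype.card_fin]) y
        rwa [Fintype.card_fin] at h

lemma Real.half_le_log_one_add {u : ℝ} (h0 : 0 ≤ u) (h1 : u ≤ 1) :
    u / 2 ≤ Real.log (1 + u) := by
  refine le_trans ?_ (Real.one_sub_inv_le_log_of_pos (by linarith))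
  rw [le_sub_iff_add_le, ← le_sub_iff_add_le', inv_le_iff_one_le_mul₀ (by linarith)]
  nlinarith

theorem linShtarkov_lower_bound_general
    {H : Type*} [NormedAddCommGroup H] [InnerProductSpace ℝ H]
    (T : ℕ) (x : Fin T → H) (hx : Orthonormal ℝ x) :
    (1 + 1 / Real.sqrt T) ^ T ≤ linShtarkov T x ∧
    (T : ℝ) * Real.log (1 + 1 / Real.sqrt T) ≤ Real.log (linShtarkov T x) ∧
    Real.sqrt T / 4 ≤ Real.log (linShtarkov T x) := by
  set u : ℝ := 1 / Real.sqrt T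
  have hu0 : 0 ≤ u := by positivity
  have hu1 : u ≤ 1 := by
    rcases Nat.eq_zero_or_pos T with rfl | hT
    · simp [u]
    · exact div_le_one_of_le₀ (Real.one_le_sqrt.mpr (by exact_mod_cast hT)) (by positivity)
  have hTu : (T : ℝ) * u = Real.sqrt T := by rw [mul_one_div, Real.div_sqrt]
  have hTu2 : (T : ℝ) * u ^ 2 ≤ 1 := by
    rw [div_pow, Real.sq_sqrt (Nat.cast_nonneg T), one_pow, mul_one_div]
    exact div_self_le_one _
  have hS : (1 + u) ^ T ≤ linShtarkov T x := hx.one_add_pow_le_linShtarkov hTu2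
  have hlog : (T : ℝ) * Real.log (1 + u) ≤ Real.log (linShtarkov T x) := by
    rw [← Real.log_pow]
    exact Real.log_le_log (by positivity) hS
  refine ⟨hS, hlog, le_trans ?_ hlog⟩
  calc Real.sqrt T / 4 ≤ T * (u / 2) := by
        rw [← mul_div_assoc, hTu]; linarith [Real.sqrt_nonneg T]
    _ ≤ T * Real.log (1 + u) := by gcongr; exact Real.half_le_log_one_add hu0 hu1

/-- Let `H` be a real Hilbert space, `T ≥ 1`, and `x_1, …, x_T ∈ H`
orthonormal.  Then the conditional Shtarkov sum of the linear class `F^Lin` on `x_{1:T}`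
satisfies `S_T(F^Lin | x_{1:T}) ≥ (1 + 1/√T)^T`; consequently
`log S_T(F^Lin | x_{1:T}) ≥ T·log(1 + 1/√T) ≥ √T/4`. -/
theorem linShtarkov_lower_bound
    {H : Type*} [NormedAddCommGroup H] [InnerProductSpace ℝ H] [CompleteSpace H]
    (T : ℕ) (hT : 1 ≤ T) (x : Fin T → H) (hx : Orthonormal ℝ x) :
    (1 + 1 / Real.sqrt T) ^ T ≤ linShtarkov T x ∧
    (T : ℝ) * Real.log (1 + 1 / Real.sqrt T) ≤ Real.log (linShtarkov T x) ∧
    Real.sqrt T / 4 ≤ Real.log (linShtarkov T x) :=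
  linShtarkov_lower_bound_general T x hx
end

section
/- For every nonempty class F of sequential experts, every horizon T ≥ 1, and every δ ∈ (0, 1/2), the minimax regret satisfies R_T(F) ≤ R_T(F^δ) + T·log(1 + |Y|δ). -/
open scoped BigOperators

/-- The smooth truncation `T_δ(p)(y) = (p(y) + δ)/(1 + |Y|δ)`. -/
noncomputable def truncate {Y : Type*} [Fintype Y] (δ : ℝ) (hδ : 0 ≤ δ)
    (p : Simplex Y) : Simplex Y :=
  ⟨fun y => (p.1 y + δ) / (1 + (Fintype.card Y : ℝ) * δ), by
    have hpos : (0 : ℝ) < 1 + (Fintype.card Y : ℝ) * δ := by positivity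
    constructor
    · intro y
      exact div_nonneg (add_nonneg (p.2.1 y) hδ) hpos.le
    · rw [← Finset.sum_div, Finset.sum_add_distrib, p.2.2, Finset.sum_const,
        Finset.card_univ, nsmul_eq_mul]
      exact div_self hpos.ne'⟩

/-- The smooth truncated expert `f^δ = T_δ ∘ f`. -/
noncomputable def truncateExpert {X Y : Type*} [Fintype Y] (δ : ℝ) (hδ : 0 ≤ δ)
    (f : Expert X Y) : Expert X Y :=
  fun xs ys => truncate δ hδ (f xs ys)

/-! Since `T_δ(p)(y) ≥ p(y)/(1 + |Y|δ)`, truncating an expert raises its loss by at most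
`log(1 + |Y|δ)` per round. So on every play the comparator term of `F^δ` is within
`T·log(1 + |Y|δ)` of that of `F`, and this additive gap survives every `sup`/`inf` of the
game unchanged, since the learner's moves do not depend on the class. -/

namespace EReal

lemma sub_le_sub_add_coe {a b b' : EReal} {c : ℝ} (h : b' ≤ b + c) : a - b ≤ a - b' + c := by
  have hneg : -b ≤ -b' + c := by
    rw [← EReal.neg_sub (.inr (coe_ne_bot c)) (.inr (coe_ne_top c)), EReal.neg_le_neg_iff]
    exact sub_le_of_le_add h
  rw [sub_eq_add_neg, sub_eq_add_neg, add_assoc]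
  exact add_le_add_right hneg a

lemma iInf_le_iInf_add_coe {ι κ : Sort*} {u : κ → EReal} {v : ι → EReal} {c : ℝ}
    (h : ∀ i, ∃ k, u k ≤ v i + c) : ⨅ k, u k ≤ (⨅ i, v i) + c := by
  rw [← sub_le_iff_le_add (.inl (coe_ne_bot c)) (.inl (coe_ne_top c))]
  refine le_iInf fun i => ?_
  obtain ⟨k, hk⟩ := h i
  exact sub_le_of_le_add ((iInf_le u k).trans hk)

lemma iSup_le_iSup_add_coe {ι : Sort*} {u v : ι → EReal} {c : ℝ}
    (h : ∀ i, u i ≤ v i + c) : ⨆ i, u i ≤ (⨆ i, v i) + c :=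
  iSup_le fun i => (h i).trans (add_le_add_left (le_iSup v i) _)

end EReal

section

variable {X Y : Type*} [Fintype Y] [Inhabited Y]

theorem valToGo_le_add_of_iInf_cumLoss_le {F G : Set (Expert X Y)} {c : ℝ}
    (h : ∀ xs ys, ⨅ g : G, cumLoss (g : Expert X Y) xs ys ≤
      (⨅ f : F, cumLoss (f : Expert X Y) xs ys) + ((ys.length * c : ℝ) : EReal))
    (r : ℕ) (xs : List X) (ys : List Y) (acc : EReal) :
    valToGo F r xs ys acc ≤
      valToGo G r xs ys acc + ((((ys.length + r : ℕ) : ℝ) * c : ℝ) : EReal) := by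
  induction r generalizing xs ys acc with
  | zero => simpa [valToGo] using EReal.sub_le_sub_add_coe (h xs ys)
  | succ r ih =>
    refine EReal.iSup_le_iSup_add_coe fun x => EReal.iInf_le_iInf_add_coe fun p =>
      ⟨p, EReal.iSup_le_iSup_add_coe fun y => ?_⟩
    convert ih (xs ++ [x]) (ys ++ [y]) (acc + logloss p y) using 5
    simp only [List.length_append, List.length_singleton]
    omega

end

section Truncation

variable {Y : Type*} [Fintype Y] {δ : ℝ}

theorem logloss_truncate_le (hδ : 0 ≤ δ) (p : Simplex Y) (y : Y) :
    logloss (truncate δ hδ p) y ≤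
      logloss p y + ((Real.log (1 + (Fintype.card Y : ℝ) * δ) : ℝ) : EReal) := by
  rcases le_or_gt (p.1 y) 0 with hp | hp
  · simp [logloss, negLog, hp]
  have hK : (0 : ℝ) < 1 + (Fintype.card Y : ℝ) * δ := by positivity
  have hpδ : 0 < p.1 y + δ := by linarith
  have hq : 0 < (p.1 y + δ) / (1 + (Fintype.card Y : ℝ) * δ) := div_pos hpδ hK
  change negLog ((p.1 y + δ) / _) ≤ negLog (p.1 y) + _
  rw [negLog, negLog, if_neg hq.not_ge, if_neg hp.not_ge, ← EReal.coe_add,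
    EReal.coe_le_coe_iff, Real.log_div hpδ.ne' hK.ne']
  linarith [Real.log_le_log hp (le_add_of_nonneg_right hδ : p.1 y ≤ p.1 y + δ)]

variable {X : Type*} [Inhabited Y]

theorem cumLoss_truncateExpert_le (hδ : 0 ≤ δ) (f : Expert X Y) (xs : List X) (ys : List Y) :
    cumLoss (truncateExpert δ hδ f) xs ys ≤
      cumLoss f xs ys +
        (((ys.length : ℝ) * Real.log (1 + (Fintype.card Y : ℝ) * δ) : ℝ) : EReal) := by
  calc cumLoss (truncateExpert δ hδ f) xs ys
      ≤ ∑ t ∈ Finset.range ys.length, (logloss (f (xs.take (t + 1)) (ys.take t))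
          (ys.getD t default) + ((Real.log (1 + (Fintype.card Y : ℝ) * δ) : ℝ) : EReal)) :=
        Finset.sum_le_sum fun t _ => logloss_truncate_le hδ _ _
    _ = _ := by
        rw [Finset.sum_add_distrib, cumLoss, Finset.sum_const, Finset.card_range,
          ← EReal.coe_nsmul, nsmul_eq_mul]

theorem iInf_cumLoss_truncateExpert_le (hδ : 0 ≤ δ) (F : Set (Expert X Y))
    (xs : List X) (ys : List Y) :
    ⨅ g : (truncateExpert δ hδ '' F), cumLoss (g : Expert X Y) xs ys ≤
      (⨅ f : F, cumLoss (f : Expert X Y) xs ys) +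
        (((ys.length : ℝ) * Real.log (1 + (Fintype.card Y : ℝ) * δ) : ℝ) : EReal) :=
  EReal.iInf_le_iInf_add_coe fun f =>
    ⟨⟨_, Set.mem_image_of_mem _ f.2⟩, cumLoss_truncateExpert_le hδ f.1 xs ys⟩

end Truncation

theorem minimaxRegret_le_truncated_general
    {X Y : Type*} [Fintype Y] [Inhabited Y]
    (F : Set (Expert X Y)) (T : ℕ)
    (δ : ℝ) (hδ0 : 0 < δ) :
    minimaxRegret F T ≤
      minimaxRegret (truncateExpert δ hδ0.le '' F) T +
        (((T : ℝ) * Real.log (1 + (Fintype.card Y : ℝ) * δ) : ℝ) : EReal) := by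
  simpa [minimaxRegret] using
    valToGo_le_add_of_iInf_cumLoss_le (iInf_cumLoss_truncateExpert_le hδ0.le F) T [] [] 0

/-- For every nonempty class `F` of sequential experts, every horizon
`T ≥ 1` and every `δ ∈ (0, 1/2)`, the minimax regret satisfies
`R_T(F) ≤ R_T(F^δ) + T·log(1 + |Y|δ)`, where `F^δ = {T_δ ∘ f : f ∈ F}`. -/
theorem minimaxRegret_le_truncated
    {X Y : Type*} [Fintype Y] [Inhabited Y] [Nonempty X]
    (F : Set (Expert X Y)) (hF : F.Nonempty) (T : ℕ) (hT : 1 ≤ T)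
    (δ : ℝ) (hδ0 : 0 < δ) (hδ1 : δ < 1 / 2) :
    minimaxRegret F T ≤
      minimaxRegret (truncateExpert δ hδ0.le '' F) T +
        (((T : ℝ) * Real.log (1 + (Fintype.card Y : ℝ) * δ) : ℝ) : EReal) :=
  minimaxRegret_le_truncated_general F T δ hδ0
end
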